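/- arXiv:2011.07512 — 4 statements merged into one kernel-verified Lean document; each statement's English description precedes it below -/
import Mathlib

section
/- Let a, e1, e2, e3 be positive integers with a < e_i for i = 1,2,3 and gcd(e1, e2, e3) = 1, and let λ ≥ 1 be a rational number. Then (a + e2 + e3)/(e1 * e2 * e3) + λ/a ≤ 1/2 + λ. -/
/-!
Since `λ ≥ 0` and `a ≥ 1`, `λ / a ≤ λ`, so it suffices that `2 (a + e₂ + e₃) ≤ e₁ e₂ e₃`.
All `eᵢ ≥ 2`. If `e₁ ≥ 3` this follows from `e₂ e₃ ≥ 2 e₂ > 2a` and `e₂ e₃ ≥ 2 e₂, 2 e₃`.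
If `e₁ = 2`, then `a = 1` and the claim is `2 ≤ (e₂ - 1)(e₃ - 1)`, which fails only for
`e₂ = e₃ = 2`; the gcd condition excludes `e₁ = e₂ = e₃ = 2`.
-/

lemma one_add_add_le_mul {m n : ℕ} (hm : 2 ≤ m) (hn : 2 ≤ n) (hmn : 3 ≤ m ∨ 3 ≤ n) :
    1 + m + n ≤ m * n := by
  rcases hmn with hm3 | hn3 <;> nlinarith

lemma two_mul_add_add_le_mul_mul {a e1 e2 e3 : ℕ} (ha : 0 < a)
    (h1 : a < e1) (h2 : a < e2) (h3 : a < e3) (hne : ¬(e1 = 2 ∧ e2 = 2 ∧ e3 = 2)) :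
    2 * (a + e2 + e3) ≤ e1 * e2 * e3 := by
  rcases (show e1 = 2 ∨ 3 ≤ e1 by omega) with rfl | he1
  · obtain rfl : a = 1 := by omega
    have := one_add_add_le_mul (m := e2) (n := e3) (by omega) (by omega) (by omega)
    linarith
  · have h23 : e2 * 2 ≤ e2 * e3 := Nat.mul_le_mul_left e2 (by omega : 2 ≤ e3)
    have h32 : 2 * e3 ≤ e2 * e3 := Nat.mul_le_mul_right e3 (by omega : 2 ≤ e2)
    have h123 : 3 * (e2 * e3) ≤ e1 * (e2 * e3) := Nat.mul_le_mul_right _ he1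
    rw [mul_assoc]
    omega

/-- Lemma (numerics): for positive integers `a < e₁, e₂, e₃` with `gcd {e₁, e₂, e₃} = 1`
and a rational `λ ≥ 1`, we have `(a + e₂ + e₃)/(e₁ e₂ e₃) + λ/a ≤ 1/2 + λ`. -/
theorem stmt_1 (a e1 e2 e3 : ℕ) (ha : 0 < a)
    (h1 : a < e1) (h2 : a < e2) (h3 : a < e3)
    (hgcd : Nat.gcd e1 (Nat.gcd e2 e3) = 1)
    (lam : ℚ) (hlam : 1 ≤ lam) :
    ((a : ℚ) + e2 + e3) / ((e1 : ℚ) * e2 * e3) + lam / (a : ℚ) ≤ 1 / 2 + lam := by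
  have hne : ¬(e1 = 2 ∧ e2 = 2 ∧ e3 = 2) := by
    rintro ⟨rfl, rfl, rfl⟩
    exact absurd hgcd (by decide)
  have hkey : (2 * (a + e2 + e3) : ℚ) ≤ e1 * e2 * e3 := by
    exact_mod_cast two_mul_add_add_le_mul_mul ha h1 h2 h3 hne
  have hprod : (0 : ℚ) < e1 * e2 * e3 := by
    have : 0 < e1 * e2 * e3 := Nat.mul_pos (Nat.mul_pos (by omega) (by omega)) (by omega)
    exact_mod_cast this
  have hfrac : ((a : ℚ) + e2 + e3) / ((e1 : ℚ) * e2 * e3) ≤ 1 / 2 := by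
    rw [div_le_iff₀ hprod]
    linarith
  have hlam_div : lam / a ≤ lam := div_le_self (by linarith) (by exact_mod_cast ha)
  linarith
end

section
/- Let M be an n × n real matrix (n ≥ 2) satisfying: (i) (-1)^{|I|} det M_I ≥ 0 for every non-empty proper subset I of {1,...,n}, where M_I is the principal submatrix with rows and columns indexed by I; (ii) (-1)^{n-1} det M > 0; (iii) all off-diagonal entries of M are positive. Then for vectors v, w ∈ ℝ^n, if M v ≤ M w componentwise, then v ≤ w componentwise. -/
open Matrix Finset

section Dev
variable {m : Type} [Fintype m] [DecidableEq m]

/-- principal minor -/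
noncomputable def pmin (C : Matrix m m ℝ) (S : Finset m) : ℝ :=
  (C.submatrix (fun i : S => (i : m)) (fun i : S => (i : m))).det

/-- Schur complement entries (defined on all of `m`). -/
noncomputable def sch (C : Matrix m m ℝ) (k : m) : Matrix m m ℝ :=
  Matrix.of fun a b => C a b - C a k * C k b / C k k

lemma pmin_congr {C D : Matrix m m ℝ} {S : Finset m}
    (h : ∀ a ∈ S, ∀ b ∈ S, C a b = D a b) : pmin C S = pmin D S := by
  unfold pmin
  congr 1
  ext a b
  exact h a a.2 b b.2

lemma pmin_empty (C : Matrix m m ℝ) : pmin C (∅ : Finset m) = 1 := by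
  haveI : IsEmpty ((∅ : Finset m) : Type) := ⟨fun x => (Finset.notMem_empty _ x.2)⟩
  exact Matrix.det_isEmpty

lemma pmin_singleton (C : Matrix m m ℝ) (k : m) : pmin C ({k} : Finset m) = C k k := by
  letI : Unique (({k} : Finset m) : Type) :=
    ⟨⟨⟨k, Finset.mem_singleton_self k⟩⟩, fun a => Subtype.ext (Finset.mem_singleton.mp a.2)⟩
  rw [pmin, Matrix.det_unique]
  rfl

lemma det_eq_schur (C : Matrix m m ℝ) (k : m) (h : C k k ≠ 0) :
    C.det = C k k *
      (Matrix.of fun i j : {i : m // i ≠ k} =>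
        C ↑i ↑j - C ↑i k * C k ↑j / C k k).det := by
  classical
  let e : ({i : m // i ≠ k} ⊕ Unit) ≃ m :=
  { toFun := fun x => match x with | Sum.inl i => (i : m) | Sum.inr _ => k
    invFun := fun i => if hik : i = k then Sum.inr () else Sum.inl ⟨i, hik⟩
    left_inv := by
      rintro (⟨i, hi⟩ | ⟨⟩)
      · simp [hi]
      · simp
    right_inv := fun i => by by_cases hi : i = k <;> simp [hi] }
  have hsub : C.submatrix e e =
      Matrix.fromBlocks (Matrix.of fun i j : {i : m // i ≠ k} => C ↑i ↑j)
        (Matrix.of fun (i : {i : m // i ≠ k}) (_ : Unit) => C ↑i k)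
        (Matrix.of fun (_ : Unit) (j : {i : m // i ≠ k}) => C k ↑j)
        (Matrix.of fun (_ : Unit) (_ : Unit) => C k k) := by
    ext (i | i) (j | j) <;> rfl
  letI : Invertible (Matrix.of fun (_ : Unit) (_ : Unit) => C k k) :=
    ⟨Matrix.of fun _ _ => (C k k)⁻¹,
     by ext i j; simp [Matrix.mul_apply, inv_mul_cancel₀ h, Matrix.one_apply],
     by ext i j; simp [Matrix.mul_apply, mul_inv_cancel₀ h, Matrix.one_apply]⟩
  have := Matrix.det_submatrix_equiv_self e C
  rw [hsub, Matrix.det_fromBlocks₂₂] at this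
  rw [← this]
  congr 1
  · simp [Matrix.det_unique]
  · congr 1
    ext i j
    simp [Matrix.mul_apply, Matrix.sub_apply]
    ring


lemma schur_pm (C : Matrix m m ℝ) (k : m) (h : C k k ≠ 0) (T : Finset m) (hk : k ∉ T) :
    pmin C (insert k T) = C k k * pmin (sch C k) T := by
  classical
  set S : Finset m := insert k T with hS
  set k' : (S : Type) := ⟨k, Finset.mem_insert_self k T⟩ with hk'
  set Dm : Matrix S S ℝ := C.submatrix (fun i : S => (i : m)) (fun i : S => (i : m)) with hDm
  have h' : Dm k' k' ≠ 0 := h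
  have hmain := det_eq_schur Dm k' h'
  have hphi : ∀ i : {i : (S : Type) // i ≠ k'}, ((i : (S : Type)) : m) ∈ T := by
    intro i
    rcases Finset.mem_insert.mp (i : (S : Type)).2 with h1 | h1
    · exact absurd (Subtype.ext h1) i.2
    · exact h1
  let φ : {i : (S : Type) // i ≠ k'} ≃ (T : Type) :=
  { toFun := fun i => ⟨↑↑i, hphi i⟩
    invFun := fun j => ⟨⟨↑j, Finset.mem_insert_of_mem j.2⟩, fun hh => hk (by
      have hjk : (↑j : m) = k := congrArg Subtype.val hh
      exact hjk ▸ j.2)⟩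
    left_inv := fun i => Subtype.ext (Subtype.ext rfl)
    right_inv := fun j => Subtype.ext rfl }
  have h2 : (Matrix.of fun i j : {i : (S : Type) // i ≠ k'} =>
      Dm ↑i ↑j - Dm ↑i k' * Dm k' ↑j / Dm k' k')
      = ((sch C k).submatrix (fun i : T => (i : m)) (fun i : T => (i : m))).submatrix φ φ := rfl
  rw [h2, Matrix.det_submatrix_equiv_self] at hmain
  exact hmain

lemma colsplit (C : Matrix m m ℝ) (k : m) (t : ℝ) (T : Finset m) (hk : k ∉ T) :
    pmin (Matrix.of fun a b => C a b + if a = k ∧ b = k then t else 0) (insert k T)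
      = pmin C (insert k T) + t * pmin C T := by
  classical
  set S : Finset m := insert k T with hS
  set k' : (S : Type) := ⟨k, Finset.mem_insert_self k T⟩ with hk'
  set Dm : Matrix S S ℝ := C.submatrix (fun i : S => (i : m)) (fun i : S => (i : m)) with hDm
  set G : Matrix m m ℝ :=
    Matrix.of fun a b => if b = k then (if a = k then (1:ℝ) else 0) else C a b with hG
  have hik : ∀ i : (S : Type), ((i : m) = k) ↔ i = k' :=
    fun i => ⟨fun hh => Subtype.ext hh, fun hh => congrArg Subtype.val hh⟩
  have e1 : (Matrix.of fun a b => C a b + if a = k ∧ b = k then t else 0).submatrix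
      (fun i : S => (i : m)) (fun i : S => (i : m))
      = Dm.updateCol k' ((fun i : S => Dm i k') + fun i : S => if i = k' then t else 0) := by
    ext i j
    simp only [Matrix.submatrix_apply, Matrix.of_apply, Matrix.updateCol_apply, Pi.add_apply]
    by_cases hj : j = k'
    · have hjk : (j : m) = k := (hik j).mpr hj
      simp [hj, hjk, hik i, hDm, show (k' : m) = k from rfl]
    · have hjk : ¬((j : m) = k) := fun hh => hj ((hik j).mp hh)
      simp [hj, hjk]
      rfl
  have e4 : (fun i : S => if i = k' then t else 0)
      = t • (fun i : S => if i = k' then (1:ℝ) else 0) := by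
    funext i; by_cases hi : i = k' <;> simp [hi]
  have e6 : Dm.updateCol k' (fun i : S => if i = k' then (1:ℝ) else 0)
      = G.submatrix (fun i : S => (i : m)) (fun i : S => (i : m)) := by
    ext i j
    simp only [Matrix.submatrix_apply, Matrix.of_apply, Matrix.updateCol_apply]
    by_cases hj : j = k'
    · have hjk : (j : m) = k := (hik j).mpr hj
      simp [hj, hjk, hik i, hG, show (k' : m) = k from rfl]
    · have hjk : ¬((j : m) = k) := fun hh => hj ((hik j).mp hh)
      simp [hj, hjk, hDm, hG]
  have hGkk : G k k = 1 := by simp [hG]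
  have e7 : pmin G S = pmin (sch G k) T := by
    have := schur_pm G k (by rw [hGkk]; norm_num) T hk
    rw [hGkk, one_mul] at this
    exact this
  have e8 : pmin (sch G k) T = pmin C T := by
    apply pmin_congr
    intro a ha b hb
    have hak : a ≠ k := fun hh => hk (hh ▸ ha)
    have hbk : b ≠ k := fun hh => hk (hh ▸ hb)
    simp [sch, hG, hak, hbk, hGkk]
  show pmin _ S = pmin C S + t * pmin C T
  rw [pmin, e1, Matrix.det_updateCol_add, Matrix.updateCol_eq_self, e4,
    Matrix.det_updateCol_smul, e6]
  show Dm.det + t * pmin G S = pmin C S + t * pmin C T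
  rw [e7, e8]
  rfl

lemma lemK : ∀ (N : ℕ) (C : Matrix m m ℝ) (S : Finset m), S.card ≤ N →
    (∀ i j : m, i ≠ j → C i j ≤ 0) →
    (∀ T ⊆ S, T.Nonempty → 0 < pmin C T) →
    ∀ y : m → ℝ, (∀ i ∈ S, 0 ≤ ∑ j ∈ S, C i j * y j) →
    ∀ i ∈ S, 0 ≤ y i := by
  intro N
  induction N with
  | zero =>
    intro C S hcard _ _ y _ i hi
    rw [Nat.le_zero, Finset.card_eq_zero] at hcard
    exact absurd (hcard ▸ hi) (Finset.notMem_empty i)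
  | succ N ih =>
    intro C S hcard hZ hm y hy i hi
    have hkk : 0 < C i i := by
      have h1 := hm {i} (Finset.singleton_subset_iff.mpr hi) ⟨i, Finset.mem_singleton_self i⟩
      rwa [pmin_singleton] at h1
    have hii := hkk.ne'
    set C' := sch C i with hC'
    have hZ' : ∀ a b : m, a ≠ b → C' a b ≤ 0 := by
      intro a b hab
      by_cases hai : a = i
      · have hz : C' a b = 0 := by
          simp only [hC', sch, Matrix.of_apply, hai]
          field_simp
          ring
        exact hz.le
      · by_cases hbi : b = i
        · have hz : C' a b = 0 := by
            simp only [hC', sch, Matrix.of_apply, hbi]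
            field_simp
            ring
          exact hz.le
        · have h1 : C a b ≤ 0 := hZ a b hab
          have h2 : C a i ≤ 0 := hZ a i hai
          have h3 : C i b ≤ 0 := hZ i b (Ne.symm hbi)
          have hnum : 0 ≤ C a i * C i b := by nlinarith
          have h4 : 0 ≤ C a i * C i b / C i i := div_nonneg hnum hkk.le
          simp only [hC', sch, Matrix.of_apply]
          linarith
    have hm' : ∀ T ⊆ S.erase i, T.Nonempty → 0 < pmin C' T := by
      intro T hT hTne
      have hiT : i ∉ T := fun hh => (Finset.mem_erase.mp (hT hh)).1 rfl
      have hins : insert i T ⊆ S := by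
        intro a ha
        rcases Finset.mem_insert.mp ha with rfl | ha
        · exact hi
        · exact (Finset.mem_erase.mp (hT ha)).2
      have h1 : 0 < pmin C (insert i T) := hm _ hins (Finset.insert_nonempty i T)
      rw [schur_pm C i hii T hiT] at h1
      rcases mul_pos_iff.mp h1 with ⟨_, hp⟩ | ⟨hneg, _⟩
      · exact hp
      · linarith
    have hy' : ∀ a ∈ S.erase i, 0 ≤ ∑ j ∈ S.erase i, C' a j * y j := by
      intro a ha
      obtain ⟨hane, haS⟩ := Finset.mem_erase.mp ha
      have key : ∑ j ∈ S.erase i, C' a j * y j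
          = (∑ j ∈ S, C a j * y j) - C a i / C i i * (∑ j ∈ S, C i j * y j) := by
        have e1 : ∀ j ∈ S.erase i, C' a j * y j
            = C a j * y j - C a i / C i i * (C i j * y j) := by
          intro j _
          simp only [hC', sch, Matrix.of_apply]
          ring
        rw [Finset.sum_congr rfl e1, Finset.sum_sub_distrib, ← Finset.mul_sum,
          ← Finset.sum_erase_add S _ hi, ← Finset.sum_erase_add S (fun j => C i j * y j) hi]
        field_simp
        ring
      rw [key]
      have h1 := hy a haS
      have h2 := hy i hi
      have h3 : C a i ≤ 0 := hZ a i hane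
      have h4 : C a i / C i i * (∑ j ∈ S, C i j * y j) ≤ 0 :=
        mul_nonpos_of_nonpos_of_nonneg (div_nonpos_of_nonpos_of_nonneg h3 hkk.le) h2
      linarith
    have hcard' : (S.erase i).card ≤ N := by
      have := Finset.card_erase_of_mem hi
      omega
    have hrec := ih C' (S.erase i) hcard' hZ' hm' y hy'
    -- now conclude for i
    have hrow := hy i hi
    rw [← Finset.sum_erase_add S _ hi] at hrow
    have hsum : ∑ j ∈ S.erase i, C i j * y j ≤ 0 := by
      apply Finset.sum_nonpos
      intro j hj
      obtain ⟨hji, hjS⟩ := Finset.mem_erase.mp hj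
      exact mul_nonpos_of_nonpos_of_nonneg (hZ i j (Ne.symm hji)) (hrec j hj)
    nlinarith [hkk]

lemma lemL : ∀ (N : ℕ) (C : Matrix m m ℝ) (S : Finset m), S.card ≤ N →
    (∀ i j : m, i ≠ j → C i j ≤ 0) →
    (∀ T ⊆ S, 0 ≤ pmin C T) →
    ∀ t : ℝ, 0 < t → 0 < pmin (C + t • (1 : Matrix m m ℝ)) S := by
  intro N
  induction N with
  | zero =>
    intro C S hcard _ _ t _
    rw [Nat.le_zero, Finset.card_eq_zero] at hcard
    rw [hcard, pmin_empty]
    norm_num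
  | succ N ih =>
    intro C S hcard hZ hm t ht
    rcases S.eq_empty_or_nonempty with rfl | ⟨k, hk⟩
    · rw [pmin_empty]; norm_num
    · have hCkk : 0 ≤ C k k := by
        have h0 := hm {k} (Finset.singleton_subset_iff.mpr hk)
        rwa [pmin_singleton] at h0
      set Y := C + t • (1 : Matrix m m ℝ) with hY
      have hYkk : Y k k = C k k + t := by simp [hY, Matrix.one_apply]
      have hYkkpos : 0 < Y k k := by rw [hYkk]; linarith
      have hkS : insert k (S.erase k) = S := Finset.insert_erase hk
      have h1 : pmin Y S = Y k k * pmin (sch Y k) (S.erase k) := by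
        conv_lhs => rw [← hkS]
        exact schur_pm Y k hYkkpos.ne' (S.erase k) (Finset.notMem_erase k S)
      set W : Matrix m m ℝ := Matrix.of fun a b => C a b + if a = k ∧ b = k then t else 0 with hW
      set D := sch W k with hD
      have hWkk : W k k = C k k + t := by simp [hW]
      have hWkkpos : 0 < W k k := by rw [hWkk]; linarith
      have hWak : ∀ a, a ≠ k → W a k = C a k := by
        intro a ha; simp [hW, ha]
      have hWkb : ∀ b, b ≠ k → W k b = C k b := by
        intro b hb; simp [hW, hb]
      have hWab : ∀ a b, a ≠ k → W a b = C a b := by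
        intro a b ha; simp [hW, ha]
      have h2 : pmin (sch Y k) (S.erase k) = pmin (D + t • (1 : Matrix m m ℝ)) (S.erase k) := by
        apply pmin_congr
        intro a ha b hb
        obtain ⟨hak, _⟩ := Finset.mem_erase.mp ha
        obtain ⟨hbk, _⟩ := Finset.mem_erase.mp hb
        have hYab : Y a b = C a b + t * (if a = b then 1 else 0) := by
          simp [hY, Matrix.one_apply]
        have hYak : Y a k = C a k := by simp [hY, Matrix.one_apply, hak]
        have hkb' : k ≠ b := fun hh => hbk hh.symm
        have hYkb : Y k b = C k b := by simp [hY, Matrix.one_apply, hkb']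
        show Y a b - Y a k * Y k b / Y k k = D a b + t • (1 : Matrix m m ℝ) a b
        rw [hD]
        show Y a b - Y a k * Y k b / Y k k
            = (W a b - W a k * W k b / W k k) + t • (1 : Matrix m m ℝ) a b
        rw [hYab, hYak, hYkb, hYkk, hWab a b hak, hWak a hak, hWkb b hbk, hWkk]
        simp only [smul_eq_mul, Matrix.smul_apply, Matrix.one_apply]
        ring
      have hDZ : ∀ a b : m, a ≠ b → D a b ≤ 0 := by
        intro a b hab
        by_cases hak : a = k
        · have hz : D a b = 0 := by
            simp only [hD, sch, Matrix.of_apply, hak]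
            field_simp
            ring
          exact hz.le
        · by_cases hbk : b = k
          · have hz : D a b = 0 := by
              simp only [hD, sch, Matrix.of_apply, hbk]
              field_simp
              ring
            exact hz.le
          · have h1' : W a b ≤ 0 := by rw [hWab a b hak]; exact hZ a b hab
            have h2' : W a k ≤ 0 := by rw [hWak a hak]; exact hZ a k hak
            have h3' : W k b ≤ 0 := by rw [hWkb b hbk]; exact hZ k b (Ne.symm hbk)
            have hnum : 0 ≤ W a k * W k b := by nlinarith
            have h4' : 0 ≤ W a k * W k b / W k k := div_nonneg hnum hWkkpos.le
            simp only [hD, sch, Matrix.of_apply]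
            linarith
      have hmD : ∀ T ⊆ S.erase k, 0 ≤ pmin D T := by
        intro T hT
        have hkT : k ∉ T := fun hh => (Finset.mem_erase.mp (hT hh)).1 rfl
        have hsub : insert k T ⊆ S := by
          intro a ha
          rcases Finset.mem_insert.mp ha with rfl | ha
          · exact hk
          · exact (Finset.mem_erase.mp (hT ha)).2
        have h3 := schur_pm W k hWkkpos.ne' T hkT
        have h4 := colsplit C k t T hkT
        have h5 : 0 ≤ pmin C (insert k T) := hm _ hsub
        have h6 : 0 ≤ pmin C T := hm _ (fun a ha => (Finset.mem_erase.mp (hT ha)).2)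
        rw [← hW] at h4
        rw [h4, hWkk] at h3
        by_contra hcon
        push_neg at hcon
        nlinarith
      have hcard' : (S.erase k).card ≤ N := by
        have := Finset.card_erase_of_mem hk
        have hpos : 0 < S.card := Finset.card_pos.mpr ⟨k, hk⟩
        omega
      have h7 := ih D (S.erase k) hcard' hDZ hmD t ht
      rw [h1, h2]
      exact mul_pos hYkkpos h7

lemma neg_one_pow_det_eq (M : Matrix m m ℝ) (T : Finset m) :
    pmin (-M) T = (-1 : ℝ) ^ T.card *
      (M.submatrix (fun i : T => (i : m)) (fun i : T => (i : m))).det := by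
  rw [pmin]
  have h : (-M).submatrix (fun i : T => (i : m)) (fun i : T => (i : m))
      = -(M.submatrix (fun i : T => (i : m)) (fun i : T => (i : m))) := by
    ext a b; simp
  rw [h, Matrix.det_neg, Fintype.card_coe]

end Dev

/-- Lemma: let `M` be an `n × n` real matrix (`n ≥ 2`) satisfying condition (⋆):
(i) `(-1)^{|I|} det M_I ≥ 0` for every non-empty proper subset `I ⊆ {1,…,n}`, where `M_I`
is the principal submatrix with rows and columns indexed by `I`;
(ii) `(-1)^{n-1} det M > 0`;
(iii) all off-diagonal entries of `M` are positive.
Then `M v ≤ M w` (componentwise) implies `v ≤ w` (componentwise). -/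
theorem stmt_3 (n : ℕ) (hn : 2 ≤ n) (M : Matrix (Fin n) (Fin n) ℝ)
    (hstar1 : ∀ I : Finset (Fin n), I.Nonempty → I ≠ Finset.univ →
      0 ≤ (-1 : ℝ) ^ I.card *
        (M.submatrix (fun i : I => (i : Fin n)) (fun i : I => (i : Fin n))).det)
    (hstar2 : 0 < (-1 : ℝ) ^ (n - 1) * M.det)
    (hstar3 : ∀ i j : Fin n, i ≠ j → 0 < M i j)
    (v w : Fin n → ℝ)
    (h : ∀ i, M.mulVec v i ≤ M.mulVec w i) :
    ∀ i, v i ≤ w i := by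
  classical
  set A : Matrix (Fin n) (Fin n) ℝ := -M with hA
  have hAZ : ∀ i j : Fin n, i ≠ j → A i j ≤ 0 := by
    intro i j hij
    have := hstar3 i j hij
    simp only [hA, Matrix.neg_apply]
    linarith
  have hApm : ∀ T : Finset (Fin n), T ≠ Finset.univ → 0 ≤ pmin A T := by
    intro T hT
    rcases T.eq_empty_or_nonempty with rfl | hTne
    · rw [pmin_empty]; norm_num
    · rw [hA, neg_one_pow_det_eq]
      exact hstar1 T hTne hT
  have hdetA : A.det < 0 := by
    have h1 : A.det = (-1 : ℝ) ^ n * M.det := by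
      rw [hA, Matrix.det_neg, Fintype.card_fin]
    have h2 : ((-1 : ℝ)) ^ n = -((-1 : ℝ)) ^ (n - 1) := by
      conv_lhs => rw [show n = (n - 1) + 1 from by omega]
      rw [pow_succ]
      ring
    rw [h1, h2]
    nlinarith [hstar2]
  -- continuity
  have hcont : Continuous fun t : ℝ => (A + t • (1 : Matrix (Fin n) (Fin n) ℝ)).det := by
    apply Continuous.matrix_det
    exact continuous_const.add (continuous_id.smul continuous_const)
  -- find T with positive determinant
  have hbig : ∃ T : ℝ, 0 < T ∧ 0 < (A + T • (1 : Matrix (Fin n) (Fin n) ℝ)).det := by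
    have hg : Continuous fun s : ℝ => ((1 : Matrix (Fin n) (Fin n) ℝ) + s • A).det := by
      apply Continuous.matrix_det
      exact continuous_const.add (continuous_id.smul continuous_const)
    have hmem : (0 : ℝ) ∈ (fun s : ℝ => ((1 : Matrix (Fin n) (Fin n) ℝ) + s • A).det) ⁻¹'
        Set.Ioi 0 := by
      simp [Set.mem_preimage]
    obtain ⟨ε, hε, hball⟩ := Metric.isOpen_iff.mp (isOpen_Ioi.preimage hg) 0 hmem
    refine ⟨2 / ε, div_pos two_pos hε, ?_⟩
    have hs : (ε / 2 : ℝ) ∈ Metric.ball (0 : ℝ) ε := by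
      rw [Metric.mem_ball, Real.dist_eq]
      rw [abs_of_nonneg (by linarith)]
      linarith
    have hgs : 0 < ((1 : Matrix (Fin n) (Fin n) ℝ) + (ε / 2) • A).det := hball hs
    have heq : A + (2 / ε) • (1 : Matrix (Fin n) (Fin n) ℝ)
        = (2 / ε) • ((1 : Matrix (Fin n) (Fin n) ℝ) + (ε / 2) • A) := by
      rw [smul_add, smul_smul, add_comm]
      congr 1
      rw [show (2 / ε) * (ε / 2) = 1 from by field_simp]
      simp
    rw [heq, Matrix.det_smul, Fintype.card_fin]
    exact mul_pos (pow_pos (div_pos two_pos hε) n) hgs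
  obtain ⟨T, hTpos, hfT⟩ := hbig
  -- IVT
  have hf0 : (A + (0:ℝ) • (1 : Matrix (Fin n) (Fin n) ℝ)).det < 0 := by simpa using hdetA
  obtain ⟨t0, ht0mem, ht0⟩ := intermediate_value_Ioo hTpos.le hcont.continuousOn
    (Set.mem_Ioo.mpr ⟨hf0, hfT⟩)
  have ht0pos : 0 < t0 := ht0mem.1
  set A0 : Matrix (Fin n) (Fin n) ℝ := A + t0 • (1 : Matrix (Fin n) (Fin n) ℝ) with hA0
  have hdet0 : A0.det = 0 := ht0
  have hA0Z : ∀ i j : Fin n, i ≠ j → A0 i j ≤ 0 := by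
    intro i j hij
    have := hAZ i j hij
    simp only [hA0, Matrix.add_apply, Matrix.smul_apply, Matrix.one_apply, smul_eq_mul]
    rw [if_neg hij]
    linarith
  have hA0pm : ∀ T' : Finset (Fin n), T' ≠ Finset.univ → 0 < pmin A0 T' := by
    intro T' hT'
    apply lemL T'.card A T' le_rfl hAZ _ t0 ht0pos
    intro T'' hT''
    apply hApm
    intro hcon
    exact hT' (Finset.univ_subset_iff.mp (hcon ▸ hT''))
  obtain ⟨u, hu0, hu⟩ := (Matrix.exists_mulVec_eq_zero_iff).mpr hdet0
  -- dichotomy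
  have claim : ∀ x : Fin n → ℝ, A0.mulVec x = 0 → ∀ i : Fin n, 0 < x i → ∀ j : Fin n, 0 < x j := by
    intro x hx i hxi j
    by_contra hxj
    push_neg at hxj
    set P : Finset (Fin n) := Finset.univ.filter (fun a => 0 < x a) with hP
    have hiP : i ∈ P := by simp [hP, hxi]
    have hjP : j ∉ P := by
      simp only [hP, Finset.mem_filter, Finset.mem_univ, true_and, not_lt]
      exact hxj
    have hPuniv : P ≠ Finset.univ := fun hh => hjP (hh ▸ Finset.mem_univ j)
    have hyP : ∀ a ∈ P, 0 ≤ ∑ b ∈ P, A0 a b * (-x b) := by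
      intro a ha
      have hxa : 0 < x a := by simpa [hP] using ha
      have hrow : ∑ b : Fin n, A0 a b * x b = 0 := by
        have := congrFun hx a
        simpa [Matrix.mulVec, dotProduct] using this
      rw [← Finset.sum_filter_add_sum_filter_not Finset.univ (fun b => 0 < x b)
        (fun b => A0 a b * x b)] at hrow
      have hc : 0 ≤ ∑ b ∈ Finset.univ.filter (fun b => ¬0 < x b), A0 a b * x b := by
        apply Finset.sum_nonneg
        intro b hb
        have hxb : ¬0 < x b := (Finset.mem_filter.mp hb).2
        have hab : a ≠ b := fun hh => hxb (hh ▸ hxa)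
        have h1 := hA0Z a b hab
        nlinarith [h1, le_of_not_gt hxb]
      have hsum : ∑ b ∈ P, A0 a b * (-x b) = -(∑ b ∈ P, A0 a b * x b) := by
        simp [mul_neg]
      rw [hsum, hP]
      linarith
    have hK := lemK P.card A0 P le_rfl hA0Z
      (fun T' hT' _ => hA0pm T' (fun hcon =>
        hPuniv (Finset.univ_subset_iff.mp (hcon ▸ hT'))))
      (fun b => -x b) hyP i hiP
    simp only [neg_nonneg] at hK
    linarith
  -- get a positive null vector
  obtain ⟨uu, huupos, huu⟩ : ∃ uu : Fin n → ℝ, (∀ j, 0 < uu j) ∧ A0.mulVec uu = 0 := by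
    obtain ⟨i0, hi0⟩ := Function.ne_iff.mp hu0
    rcases lt_or_gt_of_ne hi0 with hneg | hpos
    · refine ⟨fun a => -u a, fun j => claim (fun a => -u a) ?_ i0 (by simpa using hneg) j, ?_⟩
      · have : A0.mulVec (-u) = 0 := by rw [Matrix.mulVec_neg, hu, neg_zero]
        exact this
      · have : A0.mulVec (-u) = 0 := by rw [Matrix.mulVec_neg, hu, neg_zero]
        exact this
    · exact ⟨u, fun j => claim u hu i0 hpos j, hu⟩
  have hAu : ∀ a : Fin n, ∑ j : Fin n, A a j * uu j = -(t0 * uu a) := by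
    intro a
    have h1 := congrFun huu a
    have h2 : A0.mulVec uu a = A.mulVec uu a + t0 * uu a := by
      simp [hA0, Matrix.add_mulVec, Matrix.smul_mulVec, Matrix.one_mulVec]
    have h3 : A.mulVec uu a = ∑ j : Fin n, A a j * uu j := by
      simp [Matrix.mulVec, dotProduct]
    rw [h2, h3] at h1
    simp at h1
    linarith
  -- final argument
  intro i
  by_contra hvw
  push_neg at hvw
  set x : Fin n → ℝ := fun a => w a - v a with hx
  have hxi : x i < 0 := by simp [hx]; linarith
  have hMx : ∀ a : Fin n, ∑ j : Fin n, A a j * x j ≤ 0 := by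
    intro a
    have h1 : ∑ j : Fin n, M a j * x j = M.mulVec w a - M.mulVec v a := by
      simp [hx, Matrix.mulVec, dotProduct, mul_sub, Finset.sum_sub_distrib]
    have h2 : ∑ j : Fin n, A a j * x j = -(∑ j : Fin n, M a j * x j) := by
      simp [hA, Finset.sum_neg_distrib]
    rw [h2, h1]
    have := h a
    linarith
  have hune : Finset.univ.Nonempty := ⟨i, Finset.mem_univ i⟩
  set c : ℝ := Finset.univ.sup' hune (fun a => -x a / uu a) with hc
  have hcge : ∀ a : Fin n, -x a / uu a ≤ c := by
    intro a
    rw [hc]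
    exact Finset.le_sup' (fun a => -x a / uu a) (Finset.mem_univ a)
  have hcpos : 0 < c := by
    have h1 : 0 < -x i / uu i := div_pos (by linarith) (huupos i)
    exact lt_of_lt_of_le h1 (hcge i)
  obtain ⟨k, -, hck⟩ := Finset.exists_mem_eq_sup' hune (fun a => -x a / uu a)
  set z : Fin n → ℝ := fun a => x a + c * uu a with hz
  have hznn : ∀ a, 0 ≤ z a := by
    intro a
    have h1 : -x a ≤ c * uu a := by
      have := (div_le_iff₀ (huupos a)).mp (hcge a)
      linarith
    simp only [hz]
    linarith
  have hzk : z k = 0 := by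
    have h1 : c * uu k = -x k := by
      rw [hc, hck]
      exact div_mul_cancel₀ _ (huupos k).ne'
    simp only [hz]
    linarith
  have hAz : ∀ a : Fin n, ∑ j : Fin n, A a j * z j < 0 := by
    intro a
    have h1 : ∑ j : Fin n, A a j * z j
        = (∑ j : Fin n, A a j * x j) + c * ∑ j : Fin n, A a j * uu j := by
      simp only [hz, mul_add, Finset.mul_sum]
      rw [← Finset.sum_add_distrib]
      congr 1; funext j; ring
    rw [h1, hAu a]
    have h2 := hMx a
    have h3 : 0 < t0 * uu a := mul_pos ht0pos (huupos a)
    nlinarith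
  set P : Finset (Fin n) := Finset.univ.filter (fun a => 0 < z a) with hPz
  have hkP : k ∉ P := by simp [hPz, hzk]
  rcases P.eq_empty_or_nonempty with hPe | hPne
  · have hzzero : ∀ a, z a = 0 := by
      intro a
      have h1 : a ∉ P := hPe ▸ Finset.notMem_empty a
      have h2 : ¬0 < z a := by
        intro hcon
        exact h1 (by simp [hPz, hcon])
      linarith [hznn a]
    have := hAz k
    rw [Finset.sum_congr rfl (fun j _ => by rw [hzzero j, mul_zero])] at this
    simp at this
  · have hPuniv : P ≠ Finset.univ := fun hh => hkP (hh ▸ Finset.mem_univ k)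
    have hrowP : ∀ a ∈ P, ∑ b ∈ P, A a b * z b < 0 := by
      intro a ha
      have h1 : ∑ b ∈ P, A a b * z b = ∑ b : Fin n, A a b * z b := by
        rw [← Finset.sum_filter_add_sum_filter_not Finset.univ (fun b => 0 < z b)
          (fun b => A a b * z b)]
        have h2 : ∑ b ∈ Finset.univ.filter (fun b => ¬0 < z b), A a b * z b = 0 := by
          apply Finset.sum_eq_zero
          intro b hb
          have h3 : ¬0 < z b := (Finset.mem_filter.mp hb).2
          have h4 : z b = 0 := by linarith [hznn b]
          rw [h4, mul_zero]
        rw [h2, add_zero]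
      rw [h1]
      exact hAz a
    set ε : ℝ := P.inf' hPne (fun a => -(∑ b ∈ P, A a b * z b) / z a) with hε
    have hεpos : 0 < ε := by
      rw [hε, Finset.lt_inf'_iff]
      intro a ha
      have hza : 0 < z a := by simpa [hPz] using ha
      exact div_pos (by linarith [hrowP a ha]) hza
    have hεle : ∀ a ∈ P, ε * z a ≤ -(∑ b ∈ P, A a b * z b) := by
      intro a ha
      have hza : 0 < z a := by simpa [hPz] using ha
      have h1 : ε ≤ -(∑ b ∈ P, A a b * z b) / z a := Finset.inf'_le _ ha
      exact (le_div_iff₀ hza).mp h1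
    have hK := lemK P.card (A + ε • (1 : Matrix (Fin n) (Fin n) ℝ)) P le_rfl
      (by
        intro a b hab
        have := hAZ a b hab
        simp only [Matrix.add_apply, Matrix.smul_apply, Matrix.one_apply, smul_eq_mul]
        rw [if_neg hab]
        linarith)
      (by
        intro T' hT' _
        apply lemL T'.card A T' le_rfl hAZ _ ε hεpos
        intro T'' hT''
        apply hApm
        intro hcon
        exact hPuniv (Finset.univ_subset_iff.mp (hcon ▸ (hT''.trans hT'))))
      (fun b => -z b)
      (by
        intro a ha
        have h1 : ∑ b ∈ P, (A + ε • (1 : Matrix (Fin n) (Fin n) ℝ)) a b * (-z b)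
            = -(∑ b ∈ P, A a b * z b) - ε * z a := by
          have h2 : ∀ b ∈ P, (A + ε • (1 : Matrix (Fin n) (Fin n) ℝ)) a b * (-z b)
              = A a b * (-z b) + ε * ((if a = b then (1:ℝ) else 0) * (-z b)) := by
            intro b _
            simp only [Matrix.add_apply, Matrix.smul_apply, Matrix.one_apply, smul_eq_mul]
            ring
          rw [Finset.sum_congr rfl h2, Finset.sum_add_distrib, ← Finset.mul_sum]
          have h3 : ∑ b ∈ P, (if a = b then (1:ℝ) else 0) * (-z b) = -z a := by
            rw [Finset.sum_congr rfl (fun b _ => by rw [ite_mul, one_mul, zero_mul]),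
              Finset.sum_ite_eq P a (fun b => -z b), if_pos ha]
          have h4 : ∑ b ∈ P, A a b * (-z b) = -(∑ b ∈ P, A a b * z b) := by
            simp [mul_neg]
          rw [h3, h4]
          ring
        rw [h1]
        linarith [hεle a ha])
      
    obtain ⟨a0, ha0⟩ := hPne
    have := hK a0 ha0
    have hza0 : 0 < z a0 := by simpa [hPz] using ha0
    simp at this
    linarith
end

section
/- Let X = X_d ⊂ ℙ(1, a1, a2, a3, a4) be a quasi-smooth Fano 3-fold weighted hypersurface of index 1 (so d = a1 + a2 + a3 + a4) with a1 ≤ a2 ≤ a3 ≤ a4, belonging to one of the 93 singular families (i.e., not the smooth quartic or the degree 6 hypersurface in ℙ(1,1,1,1,3)), and with a2 ≥ 2. Then one of the following holds: (1) d = 2 a4; (2) d = 3 a4; (3) d = 2 a4 + a_j for some j ∈ {1,2,3}. -/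
/-!
If the vertex `p = (0:0:0:0:1)` lies on `X`, terminality at `p` gives `a₄ ∣ aᵢ + aⱼ` for a pair
of the three middle weights; as `0 < aᵢ + aⱼ < 2a₄` this forces `aᵢ + aⱼ = a₄`, hence
`d = 2a₄ + aₖ` for the remaining index `k`. Otherwise `f` contains a pure power `x₄ⁿ`, so
`d = n a₄`, and `a₄ < d < 4a₄` leaves `n ∈ {2, 3}`.
-/

open MvPolynomial

namespace MvPolynomial

variable {R σ : Type*} [CommSemiring R] [DecidableEq σ]

theorem exists_single_mem_support_of_eval_piSingle_ne_zero {f : MvPolynomial σ R} {k : σ}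
    (h : eval (Pi.single k 1) f ≠ 0) : ∃ n, Finsupp.single k n ∈ f.support := by
  rw [eval_eq] at h
  obtain ⟨m, hm, hne⟩ := Finset.exists_ne_zero_of_sum_ne_zero h
  refine ⟨m k, ?_⟩
  convert hm
  ext j
  by_cases hj : j = k
  · subst hj
    simp
  · rw [Finsupp.single_eq_of_ne hj]
    by_contra hmj
    apply hne
    rw [Finset.prod_eq_zero (Finsupp.mem_support_iff.mpr (Ne.symm hmj))]
    · exact mul_zero _
    · simp [hj, zero_pow (Ne.symm hmj)]

end MvPolynomial

theorem eq_two_mul_or_three_mul_of_mul_eq {a n d : ℕ} (h : n * a = d) (hlo : a < d)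
    (hhi : d < 4 * a) : d = 2 * a ∨ d = 3 * a := by
  have hn1 : 1 < n := Nat.lt_of_mul_lt_mul_right (a := a) (by omega)
  have hn4 : n < 4 := Nat.lt_of_mul_lt_mul_right (a := a) (by omega)
  interval_cases n <;> omega

theorem stmt_7_general (a1 a2 a3 a4 d : ℕ)
    (h12 : a1 ≤ a2) (h23 : a2 ≤ a3) (h34 : a3 ≤ a4)
    (ha2 : 2 ≤ a2)
    (hd : d = a1 + a2 + a3 + a4)
    (f : MvPolynomial (Fin 5) ℂ)
    (hhom : MvPolynomial.IsWeightedHomogeneous ![1, a1, a2, a3, a4] f d)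
    (hiso : a2 < a4)
    (hterm : MvPolynomial.eval (fun i : Fin 5 => if i = (4 : Fin 5) then 1 else 0) f = 0 →
      a4 ∣ a1 + a2 ∨ a4 ∣ a1 + a3 ∨ a4 ∣ a2 + a3) :
    d = 2 * a4 ∨ d = 3 * a4 ∨
      d = 2 * a4 + a1 ∨ d = 2 * a4 + a2 ∨ d = 2 * a4 + a3 := by
  have hvertex : (fun i : Fin 5 => if i = (4 : Fin 5) then (1 : ℂ) else 0) = Pi.single 4 1 := by
    funext i
    simp [Pi.single_apply]
  by_cases hp : eval (fun i : Fin 5 => if i = (4 : Fin 5) then 1 else 0) f = 0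
  · rcases hterm hp with hpair | hpair | hpair <;>
      have hsum := Nat.eq_of_dvd_of_lt_two_mul (by omega) hpair (by omega) <;> omega
  · rw [hvertex] at hp
    obtain ⟨n, hn⟩ := exists_single_mem_support_of_eval_piSingle_ne_zero hp
    have hdeg : n * a4 = d := by
      simpa [Finsupp.weight_single] using hhom (mem_support_iff.mp hn)
    have hcases := eq_two_mul_or_three_mul_of_mul_eq hdeg (by omega) (by omega)
    omega

/-- Lemma: let `X = X_d ⊂ ℙ(1, a₁, a₂, a₃, a₄)`, `a₁ ≤ a₂ ≤ a₃ ≤ a₄`, be a quasi-smooth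
Fano 3-fold weighted hypersurface of index 1 (so `d = a₁ + a₂ + a₃ + a₄`), belonging to one
of the 93 singular families (i.e. with `a₂ ≥ 2`).  Then `d = 2a₄`, or `d = 3a₄`, or
`d = 2a₄ + aⱼ` for some `j ∈ {1,2,3}`.

Formalization: `X` is cut out by a polynomial `f` in 5 variables which is weighted
homogeneous of degree `d` for the weights `(1, a₁, a₂, a₃, a₄)`; quasi-smoothness says the
affine cone is smooth away from the origin.  Well-formedness is `gcd(a₁,a₂,a₃,a₄) = 1`.
That `X` is a Fano 3-fold (terminal singularities) is encoded by its two combinatorial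
consequences used here: `a₂ < a₄` (isolated singularities) and, via the classification of
3-dimensional terminal cyclic quotient singularities, if the coordinate point
`p_w = (0:0:0:0:1)` lies on `X` then `a₄ ∣ aᵢ + aⱼ` for some `i ≠ j ∈ {1,2,3}`. -/
theorem stmt_7 (a1 a2 a3 a4 d : ℕ)
    (ha1 : 0 < a1) (h12 : a1 ≤ a2) (h23 : a2 ≤ a3) (h34 : a3 ≤ a4)
    (ha2 : 2 ≤ a2)
    (hwf : Nat.gcd (Nat.gcd (Nat.gcd a1 a2) a3) a4 = 1)
    (hd : d = a1 + a2 + a3 + a4)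
    (f : MvPolynomial (Fin 5) ℂ)
    (hhom : MvPolynomial.IsWeightedHomogeneous ![1, a1, a2, a3, a4] f d)
    (hqs : ∀ z : Fin 5 → ℂ, z ≠ 0 → MvPolynomial.eval z f = 0 →
      ∃ i : Fin 5, MvPolynomial.eval z (MvPolynomial.pderiv i f) ≠ 0)
    (hiso : a2 < a4)
    (hterm : MvPolynomial.eval (fun i : Fin 5 => if i = (4 : Fin 5) then 1 else 0) f = 0 →
      a4 ∣ a1 + a2 ∨ a4 ∣ a1 + a3 ∨ a4 ∣ a2 + a3) :
    d = 2 * a4 ∨ d = 3 * a4 ∨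
      d = 2 * a4 + a1 ∨ d = 2 * a4 + a2 ∨ d = 2 * a4 + a3 :=
  stmt_7_general a1 a2 a3 a4 d h12 h23 h34 ha2 hd f hhom hiso hterm
end

section
/- Let a ≥ 2 be an integer and set b1, b2, b3 to be integers with 2 ≤ a < b_i for i = 1,2,3. Then (3a + 1)/(a + 1)³ + 1/a ≤ 43/54, and consequently (a + b2 + b3)/(b1 b2 b3) + 1/a ≤ 43/54 whenever additionally a² < b1 b2 b3 and a < b_i for all i with b_i ≥ a + 1. -/
/-!
Written as `(a/(b₂b₃) + 1/b₃ + 1/b₂)/b₁`, the quotient `(a + b₂ + b₃)/(b₁b₂b₃)` is decreasing in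
each `bᵢ`, so it is at most its value `(3a + 2)/(a + 1)³` at `bᵢ = a + 1`. The one-variable
bound is then the factorization `43a(a + 1)³ - 54(a(3a + 2) + (a + 1)³) = (a - 2)(43a³ + 161a² + 127a + 27)`,
which is nonnegative for `a ≥ 2` and vanishes at `a = 2`.
-/

section

variable {K : Type*} [Field K] [LinearOrder K] [IsStrictOrderedRing K]

lemma add_add_div_mul_mul_le_of_add_one_le {a b₁ b₂ b₃ : K} (ha : 0 ≤ a)
    (h₁ : a + 1 ≤ b₁) (h₂ : a + 1 ≤ b₂) (h₃ : a + 1 ≤ b₃) :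
    (a + b₂ + b₃) / (b₁ * b₂ * b₃) ≤ (3 * a + 2) / (a + 1) ^ 3 := by
  have hb₁ : 0 < b₁ := by linarith
  have hb₂ : 0 < b₂ := by linarith
  have hb₃ : 0 < b₃ := by linarith
  calc (a + b₂ + b₃) / (b₁ * b₂ * b₃) = (a / (b₂ * b₃) + 1 / b₃ + 1 / b₂) / b₁ := by
        field_simp
    _ ≤ (a / ((a + 1) * (a + 1)) + 1 / (a + 1) + 1 / (a + 1)) / (a + 1) := by gcongr
    _ = (3 * a + 2) / (a + 1) ^ 3 := by
        field_simp
        ring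

lemma three_mul_add_two_div_add_one_pow_three_add_one_div_le {a : K} (ha : 2 ≤ a) :
    (3 * a + 2) / (a + 1) ^ 3 + 1 / a ≤ 43 / 54 := by
  have hfactor : 0 ≤ (a - 2) * (43 * a ^ 3 + 161 * a ^ 2 + 127 * a + 27) := by
    have : 0 ≤ a - 2 := by linarith
    positivity
  rw [div_add_div _ _ (by positivity) (by positivity), div_le_div_iff₀ (by positivity) (by norm_num)]
  linear_combination hfactor

end

/-- Lemma (numerics): let `a ≥ 2` be an integer.  Then
`(3a + 1)/(a + 1)³ + 1/a ≤ 43/54`, and consequently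
`(a + b₂ + b₃)/(b₁b₂b₃) + 1/a ≤ 43/54` whenever `b₁, b₂, b₃` are integers with `a < bᵢ`
for all `i` and `a² < b₁b₂b₃`. -/
theorem stmt_19 (a : ℕ) (ha : 2 ≤ a) :
    ((3 * (a : ℚ) + 1) / ((a : ℚ) + 1) ^ 3 + 1 / (a : ℚ) ≤ 43 / 54) ∧
      ∀ b1 b2 b3 : ℕ, a < b1 → a < b2 → a < b3 → a ^ 2 < b1 * b2 * b3 →
        ((a : ℚ) + b2 + b3) / ((b1 : ℚ) * b2 * b3) + 1 / (a : ℚ) ≤ 43 / 54 := by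
  have key := three_mul_add_two_div_add_one_pow_three_add_one_div_le (K := ℚ) (a := a)
    (by exact_mod_cast ha)
  refine ⟨?_, fun b1 b2 b3 h₁ h₂ h₃ _ => ?_⟩
  · have : (3 * (a : ℚ) + 1) / ((a : ℚ) + 1) ^ 3 ≤ (3 * (a : ℚ) + 2) / ((a : ℚ) + 1) ^ 3 := by
      gcongr
      norm_num
    linarith
  · have := add_add_div_mul_mul_le_of_add_one_le (a := (a : ℚ)) (b₁ := b1) (b₂ := b2) (b₃ := b3)
      (Nat.cast_nonneg a)
      (by exact_mod_cast h₁) (by exact_mod_cast h₂) (by exact_mod_cast h₃)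
    linarith
end
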